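/- If k divides n, then the path P_k with k edges divides the hypercube Q_n. -/

import Mathlib

/-!
Identify the coordinates of the cube with pairs (block, position) via `β × Fin k ≃ Fin n`. For a
block `b` and a start `x`, flipping the coordinates of `b` one after another, in order, traces a
path with `k` edges. The edge `{y, y + e_d}`, where `d` is the `s`-th coordinate of block `b` and
`e_d` the unit vector, lies on exactly two of these paths: those starting at `y + p` and at
`y + p + e_d`, where `p` flips the first `s` coordinates of `b`. The two starts differ in parity
on `b`, so the paths whose start has even parity on its block partition the edges.
-/

open SimpleGraph

/-- `H` divides `G`: the edge set of `G` can be partitioned into edge sets of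
subgraphs of `G`, each isomorphic to `H`. -/
def GraphDivides {α β : Type} (H : SimpleGraph α) (G : SimpleGraph β) : Prop :=
  ∃ (ι : Type) (f : ι → G.Subgraph),
    (∀ i, Nonempty (H ≃g (f i).coe)) ∧
    ∀ e ∈ G.edgeSet, ∃! i, e ∈ (f i).edgeSet

/-- The `n`-dimensional hypercube graph. -/
def cube (n : ℕ) : SimpleGraph (Fin n → ZMod 2) where
  Adj x y := hammingDist x y = 1
  symm := ⟨fun x y h => by (try simp only at h ⊢); rwa [hammingDist_comm]⟩
  loopless := ⟨fun x h => by simp [hammingDist_self] at h⟩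

theorem graphDivides_of_copies {α β ι : Type} {H : SimpleGraph α} {G : SimpleGraph β}
    (c : ι → Copy H G) (h : ∀ e ∈ G.edgeSet, ∃! i, e ∈ Sym2.map (c i) '' H.edgeSet) :
    GraphDivides H G :=
  ⟨ι, fun i => (c i).toSubgraph, fun i => ⟨(c i).isoToSubgraph⟩, by simpa using h⟩

theorem pathGraph_edgeSet_eq_range (k : ℕ) :
    (pathGraph (k + 1)).edgeSet = Set.range fun t : Fin k => s(t.castSucc, t.succ) := by
  ext e
  induction e using Sym2.ind with
  | h u v =>
    simp only [mem_edgeSet, pathGraph_adj, Set.mem_range, Sym2.eq_iff, Fin.ext_iff,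
      Fin.val_castSucc, Fin.val_succ]
    constructor
    · rintro (h | h)
      · exact ⟨⟨u, by omega⟩, Or.inl ⟨rfl, h⟩⟩
      · exact ⟨⟨v, by omega⟩, Or.inr ⟨rfl, h⟩⟩
    · rintro ⟨t, ⟨h₁, h₂⟩ | ⟨h₁, h₂⟩⟩ <;> omega

section PathGraph
variable {V : Type*} {G : SimpleGraph V} {k : ℕ}

def pathGraphCopyOfAdj (f : Fin (k + 1) → V) (hinj : Function.Injective f)
    (hadj : ∀ t : Fin k, G.Adj (f t.castSucc) (f t.succ)) : Copy (pathGraph (k + 1)) G :=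
  Hom.toCopy ⟨f, fun {u v} huv => by
    obtain ⟨t, ht⟩ : s(u, v) ∈ Set.range fun t : Fin k => s(t.castSucc, t.succ) := by
      rwa [← pathGraph_edgeSet_eq_range]
    rcases Sym2.eq_iff.mp ht with ⟨rfl, rfl⟩ | ⟨rfl, rfl⟩
    · exact hadj t
    · exact (hadj t).symm⟩ hinj

theorem image_edgeSet_pathGraphCopyOfAdj (f : Fin (k + 1) → V) (hinj : Function.Injective f)
    (hadj : ∀ t : Fin k, G.Adj (f t.castSucc) (f t.succ)) :
    Sym2.map (pathGraphCopyOfAdj f hinj hadj) '' (pathGraph (k + 1)).edgeSet =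
      Set.range fun t : Fin k => s(f t.castSucc, f t.succ) := by
  rw [pathGraph_edgeSet_eq_range, ← Set.range_comp]
  rfl

end PathGraph

namespace ZModModule
variable {V : Type*} [AddCommGroup V] [Module (ZMod 2) V]

theorem sym2_mk_add_eq_mk_add_iff {u v y w : V} :
    s(u, u + v) = s(y, y + w) ↔ v = w ∧ (u = y ∨ u = y + w) := by
  rw [Sym2.eq_iff]
  constructor
  · rintro (⟨rfl, h⟩ | ⟨rfl, h⟩)
    · exact ⟨add_left_cancel h, Or.inl rfl⟩
    · have hwv : w + v = 0 := by simpa [add_assoc] using h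
      exact ⟨(neg_eq_self w ▸ add_eq_zero_iff_neg_eq.mp hwv).symm, Or.inr rfl⟩
  · rintro ⟨rfl, rfl | rfl⟩
    · exact Or.inl ⟨rfl, rfl⟩
    · exact Or.inr ⟨rfl, by rw [add_assoc, add_self, add_zero]⟩

theorem add_eq_iff_eq_add {u v w : V} : u + v = w ↔ u = w + v := by
  rw [← sub_eq_add w v, eq_sub_iff_add_eq]

end ZModModule

theorem cube_adj_iff {n : ℕ} {x y : Fin n → ZMod 2} :
    (cube n).Adj x y ↔ ∃ d, y = x + Pi.single d 1 := by
  have hne : ∀ a b : ZMod 2, a ≠ b ↔ b = a + 1 := by decide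
  change Finset.card {i | x i ≠ y i} = 1 ↔ _
  simp only [Finset.card_eq_one, Finset.ext_iff, Finset.mem_filter, Finset.mem_univ, true_and,
    Finset.mem_singleton, funext_iff, Pi.add_apply, Pi.single_apply]
  refine exists_congr fun d => forall_congr' fun i => ?_
  split_ifs with h
  · simp [h, hne]
  · simp [h, eq_comm]

theorem Pi.single_one_left_inj {ι R : Type*} [DecidableEq ι] [Zero R] [One R] [NeZero (1 : R)]
    {i j : ι} : (Pi.single i 1 : ι → R) = Pi.single j 1 ↔ i = j := by
  refine ⟨fun h => ?_, fun h => h ▸ rfl⟩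
  by_contra hij
  simpa [hij] using congrFun h i

section Blocks
variable {ι β : Type*} {k : ℕ} (σ : β × Fin k ≃ ι)

def blockPrefix [DecidableEq β] (b : β) (t : ℕ) : ι → ZMod 2 :=
  fun j => if (σ.symm j).1 = b ∧ ((σ.symm j).2 : ℕ) < t then 1 else 0

theorem blockPrefix_apply [DecidableEq β] (b b' : β) (t : ℕ) (s : Fin k) :
    blockPrefix σ b t (σ (b', s)) = if b' = b ∧ (s : ℕ) < t then 1 else 0 := by
  simp [blockPrefix]

theorem blockPrefix_succ [DecidableEq ι] [DecidableEq β] (b : β) (s : Fin k) :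
    blockPrefix σ b (s + 1) = blockPrefix σ b s + Pi.single (σ (b, s)) 1 := by
  funext j
  obtain ⟨⟨b', s'⟩, rfl⟩ := σ.surjective j
  simp only [blockPrefix_apply, Pi.add_apply, Pi.single_apply, σ.injective.eq_iff, Prod.mk.injEq,
    Fin.ext_iff]
  split_ifs <;> grind

theorem blockPrefix_injective [DecidableEq β] (b : β) :
    Function.Injective fun t : Fin (k + 1) => blockPrefix σ b t := by
  intro t t' h
  by_contra hne
  wlog hlt : t < t' generalizing t t'
  · exact this h.symm (Ne.symm hne) (lt_of_le_of_ne (not_lt.mp hlt) (Ne.symm hne))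
  have := congrFun h (σ (b, ⟨t, by omega⟩))
  simp [blockPrefix_apply, hlt] at this

def blockParity (b : β) (x : ι → ZMod 2) : ZMod 2 :=
  ∑ s, x (σ (b, s))

theorem blockParity_add_single [DecidableEq ι] (b : β) (s : Fin k) (x : ι → ZMod 2) :
    blockParity σ b (x + Pi.single (σ (b, s)) 1) = blockParity σ b x + 1 := by
  simp [blockParity, Finset.sum_add_distrib, Pi.single_apply, σ.injective.eq_iff]

end Blocks

section BlockPaths
variable {β : Type*} [DecidableEq β] {k n : ℕ} (σ : β × Fin k ≃ Fin n)

def blockPath (p : β × (Fin n → ZMod 2)) : Copy (pathGraph (k + 1)) (cube n) :=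
  pathGraphCopyOfAdj (fun t => p.2 + blockPrefix σ p.1 t)
    ((add_right_injective p.2).comp (blockPrefix_injective σ p.1))
    fun t => cube_adj_iff.mpr ⟨σ (p.1, t), by simp [blockPrefix_succ, add_assoc]⟩

theorem mem_image_edgeSet_blockPath_iff (p : β × (Fin n → ZMod 2)) (y : Fin n → ZMod 2)
    (b : β) (s : Fin k) :
    s(y, y + Pi.single (σ (b, s)) 1) ∈
        Sym2.map (blockPath σ p) '' (pathGraph (k + 1)).edgeSet ↔
      p = (b, y + blockPrefix σ b s) ∨
        p = (b, y + blockPrefix σ b s + Pi.single (σ (b, s)) 1) := by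
  rw [blockPath, image_edgeSet_pathGraphCopyOfAdj]
  simp only [Set.mem_range, Fin.val_castSucc, Fin.val_succ, blockPrefix_succ, ← add_assoc,
    ZModModule.sym2_mk_add_eq_mk_add_iff, Pi.single_one_left_inj, σ.injective.eq_iff,
    Prod.mk.injEq]
  obtain ⟨b', x⟩ := p
  simp only [exists_and_left, and_assoc, exists_eq_left, Prod.mk.injEq,
    ZModModule.add_eq_iff_eq_add, add_right_comm y (Pi.single _ _)]
  constructor
  · rintro ⟨rfl, h⟩
    exact h.imp (⟨rfl, ·⟩) (⟨rfl, ·⟩)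
  · rintro (⟨rfl, h⟩ | ⟨rfl, h⟩)
    exacts [⟨rfl, Or.inl h⟩, ⟨rfl, Or.inr h⟩]

end BlockPaths

theorem existsUnique_parity_eq_zero {γ : Type*} (par : γ → ZMod 2) {u u' : γ}
    (h : par u' = par u + 1) : ∃! p : {p // par p = 0}, p.1 = u ∨ p.1 = u' := by
  rcases (by decide : ∀ a : ZMod 2, a = 0 ∨ a = 1) (par u) with hu | hu
  · refine ⟨⟨u, hu⟩, Or.inl rfl, ?_⟩
    rintro ⟨p, hp⟩ (rfl | rfl)
    · rfl
    · simp [h, hu] at hp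
  · have hu' : par u' = 0 := by rw [h, hu]; decide
    refine ⟨⟨u', hu'⟩, Or.inr rfl, ?_⟩
    rintro ⟨p, hp⟩ (rfl | rfl)
    · simp [hu] at hp
    · rfl

theorem pathGraph_divides_cube {β : Type} [DecidableEq β] {k n : ℕ}
    (σ : β × Fin k ≃ Fin n) : GraphDivides (pathGraph (k + 1)) (cube n) := by
  refine graphDivides_of_copies
    (fun p : {p : β × (Fin n → ZMod 2) // blockParity σ p.1 p.2 = 0} => blockPath σ p.1) ?_
  intro e he
  induction e using Sym2.ind with
  | h y z =>
    obtain ⟨d, rfl⟩ : ∃ d, z = y + Pi.single d 1 := cube_adj_iff.mp he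
    obtain ⟨⟨b, s⟩, rfl⟩ := σ.surjective d
    simp only [mem_image_edgeSet_blockPath_iff]
    exact existsUnique_parity_eq_zero (fun p : β × (Fin n → ZMod 2) => blockParity σ p.1 p.2)
      (blockParity_add_single σ b s _)

theorem path_divides_cube_of_dvd (k n : ℕ) (h : k ∣ n) :
    GraphDivides (pathGraph (k + 1)) (cube n) := by
  obtain ⟨m, rfl⟩ := h
  exact pathGraph_divides_cube (finProdFinEquiv.trans (finCongr (Nat.mul_comm m k)))
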